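/- arXiv:2604.24652 — 2 statements merged into one kernel-verified Lean document; each statement's English description precedes it below -/
import Mathlib

section
/- Let (M_n) be a square-integrable martingale with M_0 = 0 whose increments X_s = M_s - M_{s-1} are independent with mean zero and variance sigma^2. Fix an integer n_0 >= 1 and let T be a random positive-integer-valued variable and E an event such that T >= n_0 on E. Then E[(M_T / T)^2 * 1_E] <= 32 * sigma^2 / n_0. -/
/-!
On the dyadic block `c ≤ T < 2c`, `c = 2^k n₀`, the partial sum `M_T` is bounded in absolute
value by the running maxima of `M` and of `-M` up to time `2c`, so `(M_T / T)²` is at most the sum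
of their squares divided by `c²`. Doob's L² inequality bounds the expectation of each squared
maximum by `4 · 2c σ²`, hence the block contributes at most `16 σ² / (2^k n₀)`, and the geometric
series over `k` gives `32 σ² / n₀`.

Doob's inequality is proved pathwise:
`(max_{n ≤ m} S_n)² ≤ 4 S_m² - 4 ∑_{n < m} (max_{j ≤ n} S_j) x_n`,
and the last sum has mean zero since each running maximum is independent of the next increment.
-/

open MeasureTheory ProbabilityTheory Finset

theorem monotone_two_pow_mul (n₀ : ℕ) : Monotone fun k : ℕ => 2 ^ k * n₀ :=
  fun _ _ h => Nat.mul_le_mul_right _ (Nat.pow_le_pow_right two_pos h)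

theorem iUnion_Ico_two_pow_mul {n₀ : ℕ} (hn₀ : 1 ≤ n₀) :
    ⋃ k, Set.Ico (2 ^ k * n₀) (2 ^ (k + 1) * n₀) = Set.Ici n₀ := by
  simpa using iUnion_Ico_map_succ_eq_Ici (f := fun k : ℕ => 2 ^ k * n₀)
    (fun k => monotone_two_pow_mul n₀ bot_le)
    (not_bddAbove_iff.2 fun b => ⟨2 ^ b * n₀, Set.mem_range_self b,
      Nat.lt_two_pow_self.trans_le (Nat.le_mul_of_pos_right _ hn₀)⟩)

theorem pairwise_disjoint_Ico_two_pow_mul (n₀ : ℕ) :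
    Pairwise (Function.onFun Disjoint fun k => Set.Ico (2 ^ k * n₀) (2 ^ (k + 1) * n₀)) := by
  simpa using (monotone_two_pow_mul n₀).pairwise_disjoint_on_Ico_succ

def runningMax (x : ℕ → ℝ) : ℕ → ℝ
  | 0 => 0
  | n + 1 => max (runningMax x n) (∑ i ∈ range (n + 1), x i)

section RunningMax

variable (x : ℕ → ℝ)

theorem runningMax_succ (n : ℕ) :
    runningMax x (n + 1) = max (runningMax x n) (∑ i ∈ range (n + 1), x i) := rfl

theorem monotone_runningMax : Monotone (runningMax x) :=
  monotone_nat_of_le_succ fun _ => le_max_left _ _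

theorem runningMax_nonneg (n : ℕ) : 0 ≤ runningMax x n :=
  monotone_runningMax x (Nat.zero_le n)

theorem sum_range_le_runningMax {n m : ℕ} (h : n ≤ m) : ∑ i ∈ range n, x i ≤ runningMax x m := by
  cases n with
  | zero => simpa using runningMax_nonneg x m
  | succ n => exact (le_max_right _ _).trans (monotone_runningMax x h)

theorem sq_sum_range_le_runningMax_sq_add {n m : ℕ} (h : n ≤ m) :
    (∑ i ∈ range n, x i) ^ 2 ≤ runningMax x m ^ 2 + runningMax (-x) m ^ 2 := by
  have hpos := sum_range_le_runningMax x h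
  have hneg : -∑ i ∈ range n, x i ≤ runningMax (-x) m := by
    simpa using sum_range_le_runningMax (-x) h
  rcases le_total 0 (∑ i ∈ range n, x i) with hS | hS
  · nlinarith [sq_nonneg (runningMax (-x) m)]
  · nlinarith [sq_nonneg (runningMax x m)]

theorem runningMax_congr {x y : ℕ → ℝ} :
    ∀ {n : ℕ}, (∀ i < n, x i = y i) → runningMax x n = runningMax y n
  | 0, _ => rfl
  | n + 1, h => by
    rw [runningMax_succ, runningMax_succ, runningMax_congr fun i hi => h i (by omega),
      sum_congr rfl fun i hi => h i (mem_range.1 hi)]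

theorem measurable_runningMax : ∀ n, Measurable fun x => runningMax x n
  | 0 => measurable_const
  | n + 1 => (measurable_runningMax n).max
      (Finset.measurable_sum _ fun i _ => measurable_pi_apply i)

theorem sum_runningMax_mul_le (m : ℕ) :
    ∑ n ∈ range m, runningMax x n * x n ≤
      runningMax x m * ∑ i ∈ range m, x i - runningMax x m ^ 2 / 2 := by
  induction m with
  | zero => simp [runningMax]
  | succ m ih =>
    rw [sum_range_succ, runningMax_succ, sum_range_succ x m]
    rcases le_total (∑ i ∈ range m, x i + x m) (runningMax x m) with h | h
    · rw [max_eq_left h]; linarith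
    · rw [max_eq_right h]
      nlinarith [sq_nonneg (∑ i ∈ range m, x i + x m - runningMax x m)]

theorem runningMax_sq_le (m : ℕ) :
    runningMax x m ^ 2 ≤
      4 * (∑ i ∈ range m, x i) ^ 2 - 4 * ∑ n ∈ range m, runningMax x n * x n := by
  nlinarith [sum_runningMax_mul_le x m, sq_nonneg (2 * ∑ i ∈ range m, x i - runningMax x m)]

end RunningMax

section Doob

variable {Ω : Type*} {mΩ : MeasurableSpace Ω} {μ : Measure Ω} {X : ℕ → Ω → ℝ}

theorem indepFun_runningMax (hmeas : ∀ s, Measurable (X s)) (hindep : iIndepFun X μ) (n : ℕ) :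
    IndepFun (fun ω => runningMax (fun i => X i ω) n) (X n) μ := by
  classical
  -- `runningMax · n` reads only the first `n` coordinates, so it factors through `(X i)_{i < n}`.
  let extend (v : range n → ℝ) (i : ℕ) : ℝ := if hi : i ∈ range n then v ⟨i, hi⟩ else 0
  have hextend : Measurable extend := measurable_pi_lambda _ fun i => by
    by_cases hi : i ∈ range n <;> simp only [extend, hi, dite_true, dite_false]
    exacts [measurable_pi_apply _, measurable_const]
  refine (hindep.indepFun_finset (range n) {n} (by simp) hmeas).comp
    ((measurable_runningMax n).comp hextend) (measurable_pi_apply ⟨n, mem_singleton_self n⟩)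
      |>.congr ?_ ?_
  · exact .of_forall fun ω => runningMax_congr fun i hi => by simp [extend, hi]
  · rfl

variable [IsProbabilityMeasure μ]

theorem memLp_runningMax (hL2 : ∀ s, MemLp (X s) 2 μ) :
    ∀ n, MemLp (fun ω => runningMax (fun i => X i ω) n) 2 μ
  | 0 => memLp_const 0
  | n + 1 => (memLp_runningMax hL2 n).sup (memLp_finsetSum (range (n + 1)) fun i _ => hL2 i)

theorem integrable_runningMax_mul (hmeas : ∀ s, Measurable (X s)) (hindep : iIndepFun X μ)
    (hL2 : ∀ s, MemLp (X s) 2 μ) (n : ℕ) :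
    Integrable (fun ω => runningMax (fun i => X i ω) n * X n ω) μ :=
  (indepFun_runningMax hmeas hindep n).integrable_mul
    ((memLp_runningMax hL2 n).integrable one_le_two) ((hL2 n).integrable one_le_two)

theorem integral_runningMax_mul_eq_zero (hmeas : ∀ s, Measurable (X s)) (hindep : iIndepFun X μ)
    (hL2 : ∀ s, MemLp (X s) 2 μ) (hmean : ∀ s, ∫ ω, X s ω ∂μ = 0) (n : ℕ) :
    ∫ ω, runningMax (fun i => X i ω) n * X n ω ∂μ = 0 := by
  rw [(indepFun_runningMax hmeas hindep n).integral_fun_mul_eq_mul_integral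
    (memLp_runningMax hL2 n).aestronglyMeasurable (hL2 n).aestronglyMeasurable, hmean, mul_zero]

theorem integral_runningMax_sq_le (hmeas : ∀ s, Measurable (X s)) (hindep : iIndepFun X μ)
    (hL2 : ∀ s, MemLp (X s) 2 μ) (hmean : ∀ s, ∫ ω, X s ω ∂μ = 0) (m : ℕ) :
    ∫ ω, runningMax (fun i => X i ω) m ^ 2 ∂μ ≤ 4 * ∫ ω, (∑ i ∈ range m, X i ω) ^ 2 ∂μ := by
  have hS : Integrable (fun ω => 4 * (∑ i ∈ range m, X i ω) ^ 2) μ :=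
    (memLp_finsetSum (range m) fun i _ => hL2 i).integrable_sq.const_mul 4
  have hC : Integrable (fun ω => 4 * ∑ n ∈ range m, runningMax (fun i => X i ω) n * X n ω) μ :=
    (integrable_finsetSum _ fun n _ => integrable_runningMax_mul hmeas hindep hL2 n).const_mul 4
  calc ∫ ω, runningMax (fun i => X i ω) m ^ 2 ∂μ
      ≤ ∫ ω, (4 * (∑ i ∈ range m, X i ω) ^ 2 -
          4 * ∑ n ∈ range m, runningMax (fun i => X i ω) n * X n ω) ∂μ :=
        integral_mono (memLp_runningMax hL2 m).integrable_sq (hS.sub hC)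
          fun ω => runningMax_sq_le (fun i => X i ω) m
    _ = 4 * ∫ ω, (∑ i ∈ range m, X i ω) ^ 2 ∂μ := by
        rw [integral_sub hS hC, integral_const_mul, integral_const_mul,
          integral_finsetSum _ fun n _ => integrable_runningMax_mul hmeas hindep hL2 n,
          sum_eq_zero fun n _ => integral_runningMax_mul_eq_zero hmeas hindep hL2 hmean n]
        ring

theorem integral_sq_sum_range (hindep : iIndepFun X μ) (hL2 : ∀ s, MemLp (X s) 2 μ)
    (hmean : ∀ s, ∫ ω, X s ω ∂μ = 0) (m : ℕ) :
    ∫ ω, (∑ i ∈ range m, X i ω) ^ 2 ∂μ = ∑ i ∈ range m, ∫ ω, X i ω ^ 2 ∂μ := by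
  have hsum : MemLp (∑ i ∈ range m, X i) 2 μ := memLp_finsetSum' (range m) fun i _ => hL2 i
  have hsum_mean : ∫ ω, (∑ i ∈ range m, X i) ω ∂μ = 0 := by
    simp only [Finset.sum_apply]
    rw [integral_finsetSum _ fun i _ => (hL2 i).integrable one_le_two]
    exact sum_eq_zero fun i _ => hmean i
  calc ∫ ω, (∑ i ∈ range m, X i ω) ^ 2 ∂μ = Var[∑ i ∈ range m, X i; μ] := by
        simp only [variance_of_integral_eq_zero hsum.aemeasurable hsum_mean, Finset.sum_apply]
    _ = ∑ i ∈ range m, Var[X i; μ] :=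
        IndepFun.variance_sum (fun i _ => hL2 i) fun i _ j _ hij => hindep.indepFun hij
    _ = ∑ i ∈ range m, ∫ ω, X i ω ^ 2 ∂μ :=
        sum_congr rfl fun i _ => variance_of_integral_eq_zero (hL2 i).aemeasurable (hmean i)

theorem integral_runningMax_sq_le_mul (hmeas : ∀ s, Measurable (X s)) (hindep : iIndepFun X μ)
    (hL2 : ∀ s, MemLp (X s) 2 μ) (hmean : ∀ s, ∫ ω, X s ω ∂μ = 0) {σ2 : ℝ}
    (hvar : ∀ s, ∫ ω, X s ω ^ 2 ∂μ = σ2) (m : ℕ) :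
    ∫ ω, runningMax (fun i => X i ω) m ^ 2 ∂μ ≤ 4 * (m * σ2) := by
  simpa [integral_sq_sum_range hindep hL2 hmean, hvar] using
    integral_runningMax_sq_le hmeas hindep hL2 hmean m

theorem setIntegral_sq_sum_range_div_le (hmeas : ∀ s, Measurable (X s))
    (hindep : iIndepFun X μ) (hL2 : ∀ s, MemLp (X s) 2 μ) (hmean : ∀ s, ∫ ω, X s ω ∂μ = 0)
    {σ2 : ℝ} (hvar : ∀ s, ∫ ω, X s ω ^ 2 ∂μ = σ2) {T : Ω → ℕ} {A : Set Ω} (hA : MeasurableSet A)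
    {c : ℕ} (hc : 0 < c) (hTA : ∀ ω ∈ A, c ≤ T ω ∧ T ω ≤ 2 * c) :
    ∫ ω in A, ((∑ i ∈ range (T ω), X i ω) / T ω) ^ 2 ∂μ ≤ 16 * σ2 / c := by
  have hmeas' : ∀ s, Measurable (-X s) := fun s => (hmeas s).neg
  have hindep' : iIndepFun (fun s => -X s) μ :=
    hindep.comp (fun _ => Neg.neg) fun _ => measurable_neg
  have hL2' : ∀ s, MemLp (-X s) 2 μ := fun s => (hL2 s).neg
  have hmean' : ∀ s, ∫ ω, -X s ω ∂μ = 0 := fun s => by rw [integral_neg, hmean, neg_zero]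
  have hvar' : ∀ s, ∫ ω, (-X s ω) ^ 2 ∂μ = σ2 := fun s => by simpa only [neg_sq] using hvar s
  let g ω :=
    (runningMax (fun i => X i ω) (2 * c) ^ 2 + runningMax (fun i => -X i ω) (2 * c) ^ 2) / c ^ 2
  have h1 : Integrable (fun ω => runningMax (fun i => X i ω) (2 * c) ^ 2) μ :=
    (memLp_runningMax hL2 _).integrable_sq
  have h2 : Integrable (fun ω => runningMax (fun i => -X i ω) (2 * c) ^ 2) μ :=
    (memLp_runningMax hL2' _).integrable_sq
  have hg : Integrable g μ := (h1.add h2).div_const _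
  have hcpos : (0 : ℝ) < c := by exact_mod_cast hc
  have hle : ∀ ω ∈ A, ((∑ i ∈ range (T ω), X i ω) / T ω) ^ 2 ≤ g ω := fun ω hω => by
    obtain ⟨hcT, hT2c⟩ := hTA ω hω
    rw [div_pow]
    exact div_le_div₀ (by positivity) (sq_sum_range_le_runningMax_sq_add _ hT2c) (by positivity)
      (pow_le_pow_left₀ hcpos.le (by exact_mod_cast hcT) 2)
  calc ∫ ω in A, ((∑ i ∈ range (T ω), X i ω) / T ω) ^ 2 ∂μ
      ≤ ∫ ω in A, g ω ∂μ :=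
        integral_mono_of_nonneg (.of_forall fun ω => sq_nonneg _) hg.integrableOn
          (ae_restrict_of_forall_mem hA hle)
    _ ≤ ∫ ω, g ω ∂μ := setIntegral_le_integral hg (.of_forall fun ω => by positivity)
    _ ≤ (4 * ((2 * c : ℕ) * σ2) + 4 * ((2 * c : ℕ) * σ2)) / c ^ 2 := by
        rw [integral_div, integral_add h1 h2]
        gcongr
        exacts [integral_runningMax_sq_le_mul hmeas hindep hL2 hmean hvar _,
          integral_runningMax_sq_le_mul hmeas' hindep' hL2' hmean' hvar' _]
    _ = 16 * σ2 / c := by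
        push_cast
        field_simp
        ring

end Doob

theorem mse_bound_random_count_general {Ω : Type*} [MeasureSpace Ω]
    [IsProbabilityMeasure (ℙ : Measure Ω)]
    (X : ℕ → Ω → ℝ) (hmeas : ∀ s, Measurable (X s))
    (hindep : iIndepFun X ℙ)
    (hL2 : ∀ s, MemLp (X s) 2 ℙ)
    (σ2 : ℝ) (hmean : ∀ s, (∫ ω, X s ω) = 0) (hvar : ∀ s, (∫ ω, (X s ω)^2) = σ2)
    (T : Ω → ℕ) (hT_meas : Measurable T)
    (E : Set Ω) (hE : MeasurableSet E)
    (n₀ : ℕ) (hn₀ : 1 ≤ n₀) (hTE : ∀ ω ∈ E, n₀ ≤ T ω) :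
    ∫ ω in E, ((∑ s ∈ Finset.range (T ω), X s ω) / (T ω : ℝ))^2 ≤
      32 * σ2 / n₀ := by
  have hσ2 : 0 ≤ σ2 := hvar 0 ▸ integral_nonneg fun ω => sq_nonneg _
  by_cases hint : IntegrableOn (fun ω => ((∑ s ∈ range (T ω), X s ω) / (T ω : ℝ)) ^ 2) E
  swap
  · rw [integral_undef hint]
    positivity
  let D k := E ∩ T ⁻¹' Set.Ico (2 ^ k * n₀) (2 ^ (k + 1) * n₀)
  have hED : E = ⋃ k, D k := by
    rw [← Set.inter_iUnion, ← Set.preimage_iUnion, iUnion_Ico_two_pow_mul hn₀]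
    exact (Set.inter_eq_left.2 hTE).symm
  have hD : ∀ k, MeasurableSet (D k) := fun k =>
    hE.inter (hT_meas (Set.to_countable _).measurableSet)
  have hDdisj : Pairwise (Function.onFun Disjoint D) := fun k l hkl =>
    ((pairwise_disjoint_Ico_two_pow_mul n₀ hkl).preimage T).mono
      Set.inter_subset_right Set.inter_subset_right
  have hsum := hasSum_integral_iUnion hD hDdisj (hED ▸ hint)
  rw [← hED] at hsum
  refine (hasSum_le (fun k => ?_) hsum (hasSum_geometric_two.mul_left (16 * σ2 / n₀))).trans_eq
    (by ring)
  calc ∫ ω in D k, ((∑ s ∈ range (T ω), X s ω) / (T ω : ℝ)) ^ 2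
      ≤ 16 * σ2 / ((2 ^ k * n₀ : ℕ) : ℝ) :=
        setIntegral_sq_sum_range_div_le hmeas hindep hL2 hmean hvar (hD k) (by positivity)
          fun ω hω => ⟨hω.2.1, hω.2.2.le.trans_eq (by ring)⟩
    _ = 16 * σ2 / n₀ * (1 / 2) ^ k := by
        push_cast
        rw [one_div_pow]
        field_simp

/-- MSE bound from a deterministic pull lower bound (dyadic peeling + Doob):
if `M_n = ∑_{s≤n} X_s` with independent mean-zero increments of variance `σ²`,
`T` is a random positive integer with `T ≥ n₀` on the event `E`, then
`E[(M_T/T)² 1_E] ≤ 32 σ²/n₀`. -/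
theorem mse_bound_random_count {Ω : Type*} [MeasureSpace Ω]
    [IsProbabilityMeasure (ℙ : Measure Ω)]
    (X : ℕ → Ω → ℝ) (hmeas : ∀ s, Measurable (X s))
    (hindep : iIndepFun X ℙ)
    (hL2 : ∀ s, MemLp (X s) 2 ℙ)
    (σ2 : ℝ) (hmean : ∀ s, (∫ ω, X s ω) = 0) (hvar : ∀ s, (∫ ω, (X s ω)^2) = σ2)
    (T : Ω → ℕ) (hT_meas : Measurable T) (hT_pos : ∀ ω, 1 ≤ T ω)
    (E : Set Ω) (hE : MeasurableSet E)
    (n₀ : ℕ) (hn₀ : 1 ≤ n₀) (hTE : ∀ ω ∈ E, n₀ ≤ T ω) :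
    ∫ ω in E, ((∑ s ∈ Finset.range (T ω), X s ω) / (T ω : ℝ))^2 ≤
      32 * σ2 / n₀ :=
  mse_bound_random_count_general X hmeas hindep hL2 σ2 hmean hvar T hT_meas E hE n₀ hn₀ hTE
end

section
/- Fix alpha > 0 and an integer K >= 1. Suppose (m_t)_{t >= t_0} is a nondecreasing integer sequence such that: (i) for every block [t_r + 1, t_r + K] with t_r = t_0 + r*K, either there exists u in the block with m_{u-1} >= ceil(alpha * sqrt(u)), or m_{t_r + K} >= m_{t_r} + 1; and (ii) t_0 >= (alpha * K)^2, so that alpha*(sqrt(t + K) - sqrt(t)) <= 1 for all t >= t_0. Then there exists a finite constant C (depending only on alpha, K, and m_{t_0}) such that m_t >= alpha * sqrt(t) - C for all t >= t_0. -/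
/-!
Measure the distance to the quota by the deficit `d t = α√t - m t` and look at it only at the
block endpoints `t₀ + rK`. Once `√t ≥ αK`, the quota `α√t` grows by at most one over a block.
So a block in which `m` increases does not increase the deficit, and a block in which `m`
reaches the quota `⌈α√u⌉` leaves a deficit of at most one at its end. Hence
`d (t₀ + rK) ≤ max (d t₀) 1` for all `r`, and between endpoints the deficit grows by at most one.
-/

open Real

theorem mul_sqrt_le_mul_sqrt_add_one {α K s t : ℝ} (hα : 0 ≤ α) (ht : (α * K) ^ 2 ≤ t)
    (hs : s ≤ t + K) : α * √s ≤ α * √t + 1 := by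
  have ht₀ : 0 ≤ t := (sq_nonneg _).trans ht
  have hαK : α * K ≤ √t := Real.le_sqrt_of_sq_le ht
  have hsq : α ^ 2 * (t + K) ≤ (α * √t + 1) ^ 2 := by
    have := Real.sq_sqrt ht₀
    nlinarith [mul_le_mul_of_nonneg_left hαK hα, Real.sqrt_nonneg t]
  calc α * √s ≤ α * √(t + K) := by gcongr
    _ = √(α ^ 2 * (t + K)) := by rw [Real.sqrt_mul (sq_nonneg α), Real.sqrt_sq hα]
    _ ≤ α * √t + 1 := Real.sqrt_le_iff.mpr ⟨by positivity, hsq⟩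

noncomputable def deficit (α : ℝ) (m : ℕ → ℤ) (t : ℕ) : ℝ := α * √t - m t

section deficit

variable {α : ℝ} {m : ℕ → ℤ} {K s : ℕ}

theorem deficit_le_add_one (hα : 0 ≤ α) (hs : (α * K) ^ 2 ≤ (s : ℝ)) {t : ℕ}
    (ht : t ≤ s + K) (hm : m s ≤ m t) : deficit α m t ≤ deficit α m s + 1 := by
  have hsqrt := mul_sqrt_le_mul_sqrt_add_one (s := t) hα hs (by exact_mod_cast ht)
  have hm' : (m s : ℝ) ≤ m t := by exact_mod_cast hm
  unfold deficit
  linarith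

theorem deficit_add_le_of_quota (hα : 0 ≤ α) (hs : (α * K) ^ 2 ≤ (s : ℝ))
    (hmono : MonotoneOn m (Set.Ici s)) {u : ℕ} (hu₁ : s + 1 ≤ u) (hu₂ : u ≤ s + K)
    (hquota : ⌈α * √u⌉ ≤ m (u - 1)) : deficit α m (s + K) ≤ 1 := by
  have hreach : α * √u ≤ m (s + K) := by
    have hm : m (u - 1) ≤ m (s + K) :=
      hmono (Set.mem_Ici.mpr (by omega)) (Set.mem_Ici.mpr (by omega)) (by omega)
    calc α * √u ≤ ⌈α * √u⌉ := Int.le_ceil _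
      _ ≤ m (s + K) := by exact_mod_cast hquota.trans hm
  have hsqrt : α * √((s + K : ℕ) : ℝ) ≤ α * √u + 1 :=
    mul_sqrt_le_mul_sqrt_add_one hα (hs.trans (by exact_mod_cast (by omega : s ≤ u)))
      (by exact_mod_cast (by omega : s + K ≤ u + K))
  unfold deficit
  linarith

theorem deficit_add_le_of_increment (hα : 0 ≤ α) (hs : (α * K) ^ 2 ≤ (s : ℝ))
    (hinc : m s + 1 ≤ m (s + K)) : deficit α m (s + K) ≤ deficit α m s := by
  have hsqrt : α * √((s + K : ℕ) : ℝ) ≤ α * √s + 1 :=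
    mul_sqrt_le_mul_sqrt_add_one hα hs (Nat.cast_add s K).le
  have hinc' : (m s : ℝ) + 1 ≤ m (s + K) := by exact_mod_cast hinc
  unfold deficit
  linarith

theorem deficit_add_le_max (hα : 0 ≤ α) (hs : (α * K) ^ 2 ≤ (s : ℝ))
    (hmono : MonotoneOn m (Set.Ici s))
    (hblock : (∃ u : ℕ, s + 1 ≤ u ∧ u ≤ s + K ∧ ⌈α * √u⌉ ≤ m (u - 1)) ∨ m s + 1 ≤ m (s + K)) :
    deficit α m (s + K) ≤ max (deficit α m s) 1 := by
  rcases hblock with ⟨u, hu₁, hu₂, hquota⟩ | hinc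
  · exact (deficit_add_le_of_quota hα hs hmono hu₁ hu₂ hquota).trans (le_max_right _ _)
  · exact (deficit_add_le_of_increment hα hs hinc).trans (le_max_left _ _)

end deficit

/-- Deterministic count-floor lemma for forced exploration: a nondecreasing integer
sequence satisfying the block condition (each block of length `K` either touches the
quota `⌈α√u⌉` or increases by at least one) and starting after `t₀ ≥ (αK)²` stays
within a constant of `α√t`. -/
theorem forced_exploration_count_floor (α : ℝ) (hα : 0 < α) (K : ℕ) (hK : 1 ≤ K)
    (t₀ : ℕ) (ht₀ : (α * K)^2 ≤ (t₀ : ℝ))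
    (m : ℕ → ℤ)
    (hmono : ∀ s t : ℕ, t₀ ≤ s → s ≤ t → m s ≤ m t)
    (hblock : ∀ r : ℕ,
      (∃ u : ℕ, t₀ + r * K + 1 ≤ u ∧ u ≤ t₀ + r * K + K ∧
        ⌈α * Real.sqrt u⌉ ≤ m (u - 1)) ∨
      m (t₀ + r * K) + 1 ≤ m (t₀ + r * K + K)) :
    ∃ C : ℝ, ∀ t : ℕ, t₀ ≤ t → α * Real.sqrt t - C ≤ (m t : ℝ) := by
  have hafter {s : ℕ} (hs : t₀ ≤ s) : (α * K) ^ 2 ≤ (s : ℝ) := ht₀.trans (by exact_mod_cast hs)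
  have hmono' {s : ℕ} (hs : t₀ ≤ s) : MonotoneOn m (Set.Ici s) :=
    fun a ha b _ hab => hmono a b (hs.trans ha) hab
  have hendpoint (r : ℕ) : deficit α m (t₀ + r * K) ≤ max (deficit α m t₀) 1 := by
    induction r with
    | zero => simp
    | succ r ih =>
      rw [Nat.succ_mul, ← add_assoc]
      exact (deficit_add_le_max hα.le (hafter le_self_add) (hmono' le_self_add)
        (hblock r)).trans (max_le ih (le_max_right _ _))
  refine ⟨max (deficit α m t₀) 1 + 1, fun t ht => ?_⟩
  obtain ⟨r, hlow, hhigh⟩ : ∃ r, t₀ + r * K ≤ t ∧ t ≤ t₀ + r * K + K :=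
    ⟨(t - t₀) / K, by have := Nat.div_mul_le_self (t - t₀) K; omega,
      by have := Nat.lt_div_mul_add (a := t - t₀) hK; omega⟩
  have hdef : deficit α m t ≤ max (deficit α m t₀) 1 + 1 :=
    (deficit_le_add_one hα.le (hafter le_self_add) hhigh (hmono _ _ le_self_add hlow)).trans
      (by gcongr; exact hendpoint r)
  exact sub_le_comm.mp hdef
end
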